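/- arXiv:2002.12639 — 5 statements merged into one kernel-verified Lean document; each statement's English description precedes it below -/
import Mathlib

section
/- Let $p$ be a prime and let $G$ be a finite abelian $p$-group. Then $1 \notin I(G)$; equivalently, the quotient ring $\mathbb{Z}_p[G]/I(G)$ is nonzero. (This is the group-ring form of Lemma 2.1: $K_p^0(BA)/I_{tr}$ is a nonzero commutative ring for every finite abelian $p$-group $A$.) -/
open scoped Classical

/-- The norm element `N_H = ∑_{h ∈ H} h` of a subgroup `H` in the group algebra `R[G]`. -/
noncomputable def normElt (R : Type*) [CommRing R] {G : Type*} [Group G] [Finite G]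
    (H : Subgroup G) : MonoidAlgebra R G :=
  letI : Fintype H := Fintype.ofFinite H
  ∑ h : H, MonoidAlgebra.single (h : G) 1

/-- The norm ideal `I(G) ⊆ R[G]`, generated by the norm elements of all nontrivial
subgroups of `G`. -/
noncomputable def normIdeal (R : Type*) [CommRing R] (G : Type*) [Group G] [Finite G] :
    Ideal (MonoidAlgebra R G) :=
  Ideal.span {x | ∃ H : Subgroup G, H ≠ ⊥ ∧ x = normElt R H}

theorem one_not_mem_norm_ideal (p : ℕ) [Fact p.Prime]
    (G : Type*) [CommGroup G] [Finite G] (hG : IsPGroup p G) :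
    (1 : MonoidAlgebra ℤ_[p] G) ∉ normIdeal ℤ_[p] G ∧
      Nontrivial (MonoidAlgebra ℤ_[p] G ⧸ normIdeal ℤ_[p] G) := by
  have hp := Fact.out (p := p.Prime)
  -- ring hom to ZMod p killing the group
  let φ : MonoidAlgebra ℤ_[p] G →+* ZMod p :=
    MonoidAlgebra.liftNCRingHom (PadicInt.toZMod) 1 (by intro x y; exact Commute.all _ _)
  have hker : normIdeal ℤ_[p] G ≤ RingHom.ker φ := by
    rw [normIdeal, Ideal.span_le]
    rintro x ⟨H, hH, rfl⟩
    letI : Fintype H := Fintype.ofFinite H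
    have hφ : φ (normElt ℤ_[p] H) = (Fintype.card H : ZMod p) := by
      simp [normElt, φ, MonoidAlgebra.liftNCRingHom, map_sum]
    have hcard : (p : ℕ) ∣ Fintype.card H := by
      obtain ⟨n, hn⟩ := IsPGroup.iff_card.mp (hG.to_subgroup H)
      rcases Nat.eq_zero_or_pos n with h0 | h0
      · exfalso; apply hH
        rw [h0, pow_zero] at hn
        exact Subgroup.card_eq_one.mp hn
      · rw [Fintype.card_eq_nat_card, hn]; exact dvd_pow_self p h0.ne'
    simp only [SetLike.mem_coe, RingHom.mem_ker, hφ]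
    exact_mod_cast (ZMod.natCast_eq_zero_iff _ _).mpr hcard
  have h1 : (1 : MonoidAlgebra ℤ_[p] G) ∉ normIdeal ℤ_[p] G := by
    intro h
    have := hker h
    rw [RingHom.mem_ker, map_one] at this
    exact one_ne_zero this
  exact ⟨h1, Ideal.Quotient.nontrivial_iff.mpr ((Ideal.ne_top_iff_one _).mpr h1)⟩
end

section
/- Let $p$ be a prime and let $G = (\mathbb{Z}/p)^{\times 2}$. Then $p \in I(G)$; consequently $\mathbb{Z}_p[G]/I(G)$ is an $\mathbb{F}_p$-algebra, i.e., $p = 0$ in the quotient ring. (This is the group-ring form of Lemma 2.2: $K_p^0(B(\mathbb{Z}/p)^{\times 2})/I_{tr}$ is an $\mathbb{F}_p$-algebra.) -/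
open scoped Classical

lemma normElt_range {R : Type*} [CommRing R] {G' G : Type*} [Group G'] [Group G]
    [Finite G] [Fintype G'] (φ : G' →* G) (hφ : Function.Injective φ) :
    normElt R φ.range = ∑ g : G', MonoidAlgebra.single (φ g) (1 : R) := by
  unfold normElt
  rw [Subsingleton.elim (Fintype.ofFinite ↥φ.range) φ.fintypeRange]
  exact (Fintype.sum_bijective φ.rangeRestrict
    ⟨MonoidHom.rangeRestrict_injective_iff.2 hφ, φ.rangeRestrict_surjective⟩
    (fun g => MonoidAlgebra.single (φ g) (1 : R))
    (fun h => MonoidAlgebra.single (h : G) (1 : R))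
    (fun g => rfl)).symm

section main
variable (p : ℕ) [Fact p.Prime]

abbrev Gp := Multiplicative (ZMod p × ZMod p)

/-- the line `{(t, t*i)}` as a hom -/
noncomputable def lineHom (i : ZMod p) : Multiplicative (ZMod p) →* Gp p :=
  AddMonoidHom.toMultiplicative ((AddMonoidHom.id (ZMod p)).prod (AddMonoidHom.mulRight i))

noncomputable def vertHom : Multiplicative (ZMod p) →* Gp p :=
  AddMonoidHom.toMultiplicative ((0 : ZMod p →+ ZMod p).prod (AddMonoidHom.id (ZMod p)))

lemma lineHom_inj (i : ZMod p) : Function.Injective (lineHom p i) := by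
  intro a b h
  have := congrArg (fun x => (Multiplicative.toAdd x).1) h
  simpa [lineHom, AddMonoidHom.toMultiplicative] using this

lemma vertHom_inj : Function.Injective (vertHom p) := by
  intro a b h
  have := congrArg (fun x => (Multiplicative.toAdd x).2) h
  simpa [vertHom, AddMonoidHom.toMultiplicative] using this

lemma key_identity :
    (∑ i : ZMod p, normElt ℤ_[p] (lineHom p i).range) + normElt ℤ_[p] (vertHom p).range
      = (p : MonoidAlgebra ℤ_[p] (Gp p)) + normElt ℤ_[p] (⊤ : Subgroup (Gp p)) := by
  have htop : (⊤ : Subgroup (Gp p)) = (MonoidHom.id (Gp p)).range := by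
    exact (MonoidHom.range_eq_top.2 (fun x => ⟨x, rfl⟩)).symm
  rw [htop, normElt_range (MonoidHom.id (Gp p)) (fun a b h => h)]
  simp only [normElt_range _ (lineHom_inj p _), normElt_range _ (vertHom_inj p)]
  -- convert sums over Multiplicative to sums over the additive types
  rw [show (∑ g : Gp p, MonoidAlgebra.single ((MonoidHom.id (Gp p)) g) (1:ℤ_[p]))
      = ∑ ab : ZMod p × ZMod p, MonoidAlgebra.single (Multiplicative.ofAdd ab) (1:ℤ_[p]) from
    (Fintype.sum_equiv Multiplicative.ofAdd _ _ (fun _ => rfl)).symm]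
  rw [show (∑ i : ZMod p, ∑ t : Multiplicative (ZMod p),
        MonoidAlgebra.single (lineHom p i t) (1:ℤ_[p]))
      = ∑ i : ZMod p, ∑ t : ZMod p,
        MonoidAlgebra.single (Multiplicative.ofAdd (t, t * i)) (1:ℤ_[p]) from
    Finset.sum_congr rfl fun i _ =>
      (Fintype.sum_equiv Multiplicative.ofAdd _ _ (fun t => rfl)).symm]
  rw [show (∑ t : Multiplicative (ZMod p), MonoidAlgebra.single (vertHom p t) (1:ℤ_[p]))
      = ∑ t : ZMod p, MonoidAlgebra.single (Multiplicative.ofAdd ((0 : ZMod p), t)) (1:ℤ_[p]) from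
    (Fintype.sum_equiv Multiplicative.ofAdd _ _ (fun t => rfl)).symm]
  rw [Finset.sum_comm]
  rw [← Finset.sum_erase_add _ _ (Finset.mem_univ (0 : ZMod p))]
  have h0 : (∑ i : ZMod p,
      MonoidAlgebra.single (Multiplicative.ofAdd ((0:ZMod p), 0 * i)) (1:ℤ_[p]))
      = (p : MonoidAlgebra ℤ_[p] (Gp p)) := by
    simp only [zero_mul]
    rw [Finset.sum_const, Finset.card_univ, ZMod.card]
    have : MonoidAlgebra.single (Multiplicative.ofAdd ((0:ZMod p),(0:ZMod p))) (1:ℤ_[p])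
        = (1 : MonoidAlgebra ℤ_[p] (Gp p)) := rfl
    rw [this, nsmul_eq_mul, mul_one]
  have h1 : ∀ t : ZMod p, t ≠ 0 →
      (∑ i : ZMod p, MonoidAlgebra.single (Multiplicative.ofAdd (t, t * i)) (1:ℤ_[p]))
      = ∑ b : ZMod p, MonoidAlgebra.single (Multiplicative.ofAdd (t, b)) (1:ℤ_[p]) :=
    fun t ht => Fintype.sum_equiv (Equiv.mulLeft₀ t ht) _ _ (fun i => rfl)
  rw [Finset.sum_congr rfl (fun t ht => h1 t (Finset.ne_of_mem_erase ht)), h0]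
  rw [Fintype.sum_prod_type,
    ← Finset.sum_erase_add Finset.univ
      (fun t => ∑ b : ZMod p, MonoidAlgebra.single (Multiplicative.ofAdd (t, b)) (1:ℤ_[p]))
      (Finset.mem_univ (0 : ZMod p))]
  abel

end main

theorem p_mem_norm_ideal_rank_two (p : ℕ) [Fact p.Prime] :
    (p : MonoidAlgebra ℤ_[p] (Multiplicative (ZMod p × ZMod p))) ∈
        normIdeal ℤ_[p] (Multiplicative (ZMod p × ZMod p)) ∧
      (p : MonoidAlgebra ℤ_[p] (Multiplicative (ZMod p × ZMod p)) ⧸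
          normIdeal ℤ_[p] (Multiplicative (ZMod p × ZMod p))) = 0 := by
  set I := normIdeal ℤ_[p] (Multiplicative (ZMod p × ZMod p)) with hI
  have hline : ∀ i : ZMod p, normElt ℤ_[p] (lineHom p i).range ∈ I := by
    intro i
    apply Ideal.subset_span
    refine ⟨(lineHom p i).range, ?_, rfl⟩
    rw [Subgroup.ne_bot_iff_exists_ne_one]
    have hne : lineHom p i (Multiplicative.ofAdd 1) ≠ 1 := by
      intro h
      have := congrArg (fun x => (Multiplicative.toAdd x).1) h
      simp only [lineHom, AddMonoidHom.toMultiplicative] at this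
      exact one_ne_zero this
    exact ⟨⟨_, ⟨_, rfl⟩⟩, fun h => hne (congrArg Subtype.val h)⟩
  have hvert : normElt ℤ_[p] (vertHom p).range ∈ I := by
    apply Ideal.subset_span
    refine ⟨(vertHom p).range, ?_, rfl⟩
    rw [Subgroup.ne_bot_iff_exists_ne_one]
    have hne : vertHom p (Multiplicative.ofAdd 1) ≠ 1 := by
      intro h
      have := congrArg (fun x => (Multiplicative.toAdd x).2) h
      simp only [vertHom, AddMonoidHom.toMultiplicative] at this
      exact one_ne_zero this
    exact ⟨⟨_, ⟨_, rfl⟩⟩, fun h => hne (congrArg Subtype.val h)⟩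
  have htop : normElt ℤ_[p] (⊤ : Subgroup (Gp p)) ∈ I := by
    apply Ideal.subset_span
    refine ⟨⊤, ?_, rfl⟩
    rw [Subgroup.ne_bot_iff_exists_ne_one]
    have hne : (Multiplicative.ofAdd ((1 : ZMod p), (0 : ZMod p))) ≠ (1 : Gp p) := by
      intro h
      have := congrArg (fun x => (Multiplicative.toAdd x).1) h
      exact one_ne_zero this
    exact ⟨⟨_, trivial⟩, fun h => hne (congrArg Subtype.val h)⟩
  have hp : (p : MonoidAlgebra ℤ_[p] (Multiplicative (ZMod p × ZMod p)))
      = ((∑ i : ZMod p, normElt ℤ_[p] (lineHom p i).range) + normElt ℤ_[p] (vertHom p).range)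
        - normElt ℤ_[p] (⊤ : Subgroup (Gp p)) := by
    rw [eq_sub_iff_add_eq, add_comm ((p : MonoidAlgebra ℤ_[p] (Gp p))) _] at *
    exact (key_identity p).symm ▸ (add_comm _ _)
  have hmem : (p : MonoidAlgebra ℤ_[p] (Multiplicative (ZMod p × ZMod p))) ∈ I := by
    rw [hp]
    exact Ideal.sub_mem _ (Ideal.add_mem _ (Ideal.sum_mem _ fun i _ => hline i) hvert) htop
  refine ⟨hmem, ?_⟩
  rw [show ((p : MonoidAlgebra ℤ_[p] (Multiplicative (ZMod p × ZMod p)) ⧸ I))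
      = Ideal.Quotient.mk I (p : MonoidAlgebra ℤ_[p] (Multiplicative (ZMod p × ZMod p))) from
    (map_natCast (Ideal.Quotient.mk I) p).symm, Ideal.Quotient.eq_zero_iff_mem]
  exact hmem
end

section
/- Let $p$ be a prime and let $G$ be a finite abelian $p$-group that is not cyclic (equivalently, of rank at least $2$). Then $p \in I(G)$; consequently $\mathbb{Z}_p[G]/I(G)$ is an $\mathbb{F}_p$-algebra, i.e., $p = 0$ in the quotient ring. (This is the group-ring form of Proposition 2.3: for a finite abelian $p$-group $A$ of rank at least $2$, $K_p^0(BA)/I_{tr}$ is an $\mathbb{F}_p$-algebra.) -/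
open scoped Classical

/-!
A non-cyclic abelian `p`-group `G` contains a subgroup `E ≅ C_p × C_p`: if `g` has maximal order,
some element of order `p` lies outside `⟨g⟩`, and together with the elements of order `p` in `⟨g⟩`
they give at least `p ^ 2` solutions of `x ^ p = 1`. The `p + 1` subgroups `L` of order `p` of `E`
cover `E` and pairwise meet only in `1`, so comparing coefficients gives `∑_L N_L = N_E + p`,
which exhibits `p` as an element of `I(G)`.
-/

section ElementaryAbelianSubgroup

variable {G : Type*} {p : ℕ} [Fact p.Prime]

theorem IsPGroup.exists_notMem_pow_mem [Group G] [Finite G] (hG : IsPGroup p G)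
    {H : Subgroup G} [H.Normal] (hH : H ≠ ⊤) : ∃ x ∉ H, x ^ p ∈ H := by
  have hQ : p ∣ Nat.card (G ⧸ H) := (hG.to_quotient H).card_eq_or_dvd.resolve_left <| by
    rwa [← Subgroup.index_eq_card, Subgroup.index_eq_one]
  obtain ⟨q, hq⟩ := exists_prime_orderOf_dvd_card' p hQ
  obtain ⟨x, rfl⟩ := QuotientGroup.mk_surjective q
  refine ⟨x, fun hx => ?_, ?_⟩
  · rw [(QuotientGroup.eq_one_iff x).2 hx, orderOf_one] at hq
    exact (Fact.out : p.Prime).one_lt.ne hq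
  · rw [← QuotientGroup.eq_one_iff, QuotientGroup.mk_pow, ← hq, pow_orderOf_eq_one]

open Subgroup Monoid in
/-- If `x ^ p = g ^ m` with `g` of maximal order, then `p ∣ m`, so `x g^(-m/p)` has order `p`. -/
theorem IsPGroup.exists_pow_eq_one_notMem_zpowers [CommGroup G] [Finite G] (hG : IsPGroup p G)
    {g x : G} (hg : orderOf g = exponent G) (hx : x ∉ zpowers g) (hxp : x ^ p ∈ zpowers g) :
    ∃ y, y ^ p = 1 ∧ y ∉ zpowers g := by
  obtain ⟨m, hm⟩ := mem_zpowers_iff.1 hxp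
  obtain ⟨k, hk⟩ : p ∣ exponent G :=
    (hG.dvd_orderOf fun h : x = 1 => hx (h ▸ one_mem _)).trans (order_dvd_exponent x)
  have hk0 : (k : ℤ) ≠ 0 :=
    Int.natCast_ne_zero.2 (right_ne_zero_of_mul (hk ▸ exponent_ne_zero_of_finite))
  obtain ⟨m', rfl⟩ : (p : ℤ) ∣ m := by
    refine (mul_dvd_mul_iff_right hk0).1 ?_
    rw [← Int.natCast_mul, ← hk, ← hg, orderOf_dvd_iff_zpow_eq_one, zpow_mul, hm,
      zpow_natCast, ← pow_mul, ← hk, Monoid.pow_exponent_eq_one]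
  refine ⟨x * g ^ (-m'), ?_, fun hy => hx ?_⟩
  · rw [mul_pow, ← hm, ← zpow_natCast, ← zpow_mul, ← zpow_add]
    simp [mul_comm]
  · simpa using mul_mem hy (zpow_mem (mem_zpowers g) m')

theorem IsPGroup.sq_le_card_of_ne [Group G] {K L₁ L₂ : Subgroup G} [Finite K]
    (hK : IsPGroup p K) (h₁ : L₁ ≤ K) (h₂ : L₂ ≤ K) (c₁ : Nat.card L₁ = p)
    (c₂ : Nat.card L₂ = p) (hne : L₁ ≠ L₂) : p ^ 2 ≤ Nat.card K := by
  have hp : p.Prime := Fact.out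
  obtain ⟨n, hn⟩ := IsPGroup.iff_card.1 hK
  have hn0 : n ≠ 0 := by
    rintro rfl
    have := c₁ ▸ Subgroup.card_dvd_of_le h₁
    rw [hn, pow_zero, Nat.dvd_one] at this
    exact hp.one_lt.ne' this
  have hn1 : n ≠ 1 := by
    rintro rfl
    have eq_K : ∀ L ≤ K, Nat.card L = p → L = K := fun L hL hc =>
      Subgroup.eq_of_le_of_card_ge hL (by rw [hn, hc, pow_one])
    exact hne ((eq_K L₁ h₁ c₁).trans (eq_K L₂ h₂ c₂).symm)
  rw [hn]
  exact Nat.pow_le_pow_right hp.pos (by omega)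

open Subgroup Monoid in
theorem IsPGroup.exists_card_eq_sq_forall_pow_eq_one [CommGroup G] [Finite G]
    (hG : IsPGroup p G) (hnc : ¬IsCyclic G) :
    ∃ E : Subgroup G, Nat.card E = p ^ 2 ∧ ∀ g ∈ E, g ^ p = 1 := by
  obtain ⟨g, hg⟩ := exists_orderOf_eq_exponent (ExponentExists.of_finite (G := G))
  have hZ : zpowers g ≠ ⊤ := fun h => hnc (isCyclic_iff_exists_zpowers_eq_top.2 ⟨g, h⟩)
  obtain ⟨x, hx, hxp⟩ := hG.exists_notMem_pow_mem hZ
  obtain ⟨y, hyp, hy⟩ := hG.exists_pow_eq_one_notMem_zpowers hg hx hxp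
  have hy1 : y ≠ 1 := fun h => hy (h ▸ one_mem _)
  have hpg : p ∣ orderOf g := hg ▸ orderOf_eq_prime hyp hy1 ▸ order_dvd_exponent y
  obtain ⟨h, hhg, hh⟩ : ∃ h ∈ zpowers g, orderOf h = p :=
    ⟨_, pow_mem (mem_zpowers g) _, orderOf_pow_orderOf_div (orderOf_pos g).ne' hpg⟩
  have hΩ : p ^ 2 ≤ Nat.card (powMonoidHom p : G →* G).ker := by
    refine (hG.to_subgroup _).sq_le_card_of_ne (L₁ := zpowers h) (L₂ := zpowers y)
      ?_ ?_ ?_ ?_ ?_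
    · exact zpowers_le.2 (show h ^ p = 1 from hh ▸ pow_orderOf_eq_one h)
    · exact zpowers_le.2 hyp
    · rw [Nat.card_zpowers, hh]
    · rw [Nat.card_zpowers, orderOf_eq_prime hyp hy1]
    · intro heq
      exact hy (zpowers_le.2 hhg (heq ▸ mem_zpowers y))
  obtain ⟨E, hEΩ, hE⟩ := Sylow.exists_subgroup_le_card_pow_prime_of_le_card Fact.out hG hΩ
  exact ⟨E, hE, fun g hg => hEΩ hg⟩

end ElementaryAbelianSubgroup

section NormElement

open MonoidAlgebra Finset

variable (R : Type*) [CommRing R] {G : Type*} [Group G] [Finite G]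

theorem coeff_normElt_apply (H : Subgroup G) (g : G) :
    (normElt R H).coeff g = if g ∈ H then 1 else 0 := by
  simp only [normElt, coeff_sum, Finsupp.finsetSum_apply, coeff_single, Finsupp.single_apply]
  let : Fintype H := Fintype.ofFinite H
  split_ifs with hg
  · rw [Fintype.sum_eq_single ⟨g, hg⟩ fun h hne => if_neg fun e => hne (Subtype.ext e), if_pos rfl]
  · exact Finset.sum_eq_zero fun h _ => if_neg fun e : (h : G) = g => hg (e ▸ h.2)

theorem lift_one_normElt (H : Subgroup G) : lift R R G 1 (normElt R H) = Nat.card H := by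
  let : Fintype H := Fintype.ofFinite H
  simp [normElt, lift_single, Nat.card_eq_fintype_card]

theorem normElt_mem_normIdeal {H : Subgroup G} (hH : H ≠ ⊥) : normElt R H ∈ normIdeal R G :=
  Ideal.subset_span ⟨H, hH, rfl⟩

/-- Both sides have coefficient `1` at each `g ≠ 1` of `E` and `#S + 1` at `1`. -/
theorem sum_normElt_add_one_of_existsUnique {E : Subgroup G} {S : Finset (Subgroup G)}
    (hle : ∀ L ∈ S, L ≤ E) (hcover : ∀ g ∈ E, g ≠ 1 → ∃! L, L ∈ S ∧ g ∈ L) :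
    ∑ L ∈ S, normElt R L + 1 = normElt R E + (#S : MonoidAlgebra R G) := by
  refine MonoidAlgebra.ext (Finsupp.ext fun g => ?_)
  simp only [coeff_add, coeff_sum, coeff_natCast, one_def, coeff_single, Finsupp.add_apply,
    Finsupp.finsetSum_apply, coeff_normElt_apply, Finsupp.single_apply, sum_boole]
  rcases eq_or_ne g 1 with rfl | hg1
  · simp [add_comm]
  by_cases hgE : g ∈ E
  · obtain ⟨L, hL, huniq⟩ := hcover g hgE hg1
    have : {L ∈ S | g ∈ L} = {L} := by
      ext L'; simpa using ⟨fun h => huniq L' h, fun h => h ▸ hL⟩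
    simp [this, hgE, Ne.symm hg1]
  · have : {L ∈ S | g ∈ L} = ∅ := filter_eq_empty_iff.2 fun L hL hg => hgE (hle L hL hg)
    simp [this, hgE, Ne.symm hg1]

end NormElement

section SubgroupsOfPrimeOrder

open Finset

variable {G : Type*} [Group G] [Finite G] {p : ℕ} [Fact p.Prime] {E : Subgroup G}

theorem existsUnique_le_card_eq_prime_mem (hE : ∀ g ∈ E, g ^ p = 1) {g : G} (hgE : g ∈ E)
    (hg1 : g ≠ 1) : ∃! L : Subgroup G, (L ≤ E ∧ Nat.card L = p) ∧ g ∈ L := by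
  have hcard : Nat.card (Subgroup.zpowers g) = p := by
    rw [Nat.card_zpowers, orderOf_eq_prime (hE g hgE) hg1]
  refine ⟨Subgroup.zpowers g, ⟨⟨Subgroup.zpowers_le.2 hgE, hcard⟩, Subgroup.mem_zpowers g⟩, ?_⟩
  rintro L ⟨⟨-, hL⟩, hgL⟩
  exact (Subgroup.eq_of_le_of_card_ge (Subgroup.zpowers_le.2 hgL) (by rw [hL, hcard])).symm

theorem sum_normElt_add_one_of_pow_eq_one (R : Type*) [CommRing R] (hE : ∀ g ∈ E, g ^ p = 1)
    {S : Finset (Subgroup G)} (hS : ∀ L, L ∈ S ↔ L ≤ E ∧ Nat.card L = p) :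
    ∑ L ∈ S, normElt R L + 1 = normElt R E + (#S : MonoidAlgebra R G) :=
  sum_normElt_add_one_of_existsUnique R (fun L hL => ((hS L).1 hL).1) fun g hgE hg1 => by
    simpa only [hS] using existsUnique_le_card_eq_prime_mem hE hgE hg1

/-- Counted by applying the augmentation to `sum_normElt_add_one_of_pow_eq_one`:
`#S * p + 1 = p ^ 2 + #S`. -/
theorem card_eq_prime_add_one_of_card_eq_sq (hcard : Nat.card E = p ^ 2)
    (hE : ∀ g ∈ E, g ^ p = 1) {S : Finset (Subgroup G)}
    (hS : ∀ L, L ∈ S ↔ L ≤ E ∧ Nat.card L = p) : #S = p + 1 := by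
  have hp := (Fact.out : p.Prime).two_le
  have hid := congrArg (MonoidAlgebra.lift ℤ ℤ G 1) (sum_normElt_add_one_of_pow_eq_one ℤ hE hS)
  simp only [map_add, map_sum, map_one, map_natCast, lift_one_normElt, hcard] at hid
  rw [Finset.sum_congr rfl fun L hL => by rw [((hS L).1 hL).2], sum_const, nsmul_eq_mul] at hid
  have : ((#S : ℤ) - (p + 1)) * (p - 1) = 0 := by push_cast at hid; linear_combination hid
  have hp1 : (p : ℤ) - 1 ≠ 0 := by omega
  exact_mod_cast sub_eq_zero.1 ((mul_eq_zero.1 this).resolve_right hp1)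

end SubgroupsOfPrimeOrder

theorem p_mem_norm_ideal_of_not_cyclic (p : ℕ) [Fact p.Prime]
    (G : Type*) [CommGroup G] [Finite G] (hG : IsPGroup p G) (hnc : ¬ IsCyclic G) :
    (p : MonoidAlgebra ℤ_[p] G) ∈ normIdeal ℤ_[p] G ∧
      (p : MonoidAlgebra ℤ_[p] G ⧸ normIdeal ℤ_[p] G) = 0 := by
  obtain ⟨E, hcard, hE⟩ := hG.exists_card_eq_sq_forall_pow_eq_one hnc
  set S := (Set.toFinite {L : Subgroup G | L ≤ E ∧ Nat.card L = p}).toFinset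
  have hS : ∀ L, L ∈ S ↔ L ≤ E ∧ Nat.card L = p := by simp [S]
  have hid := sum_normElt_add_one_of_pow_eq_one ℤ_[p] hE hS
  rw [card_eq_prime_add_one_of_card_eq_sq hcard hE hS] at hid
  have hp : (p : MonoidAlgebra ℤ_[p] G) = ∑ L ∈ S, normElt ℤ_[p] L - normElt ℤ_[p] E := by
    push_cast at hid
    linear_combination -hid
  have hp1 : 1 < p := (Fact.out : p.Prime).one_lt
  have hmem : (p : MonoidAlgebra ℤ_[p] G) ∈ normIdeal ℤ_[p] G := by
    rw [hp]
    refine sub_mem (Ideal.sum_mem _ fun L hL => normElt_mem_normIdeal _ ?_)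
      (normElt_mem_normIdeal _ (mt Subgroup.card_eq_one.2 ?_))
    · exact mt Subgroup.card_eq_one.2 (((hS L).1 hL).2 ▸ hp1.ne')
    · exact hcard ▸ (Nat.one_lt_pow two_ne_zero hp1).ne'
  refine ⟨hmem, ?_⟩
  rw [← map_natCast (Ideal.Quotient.mk _), Ideal.Quotient.eq_zero_iff_mem]
  exact hmem
end

section
/- Let $p$ be a prime and let $A$ be a finite abelian $p$-group. Then the evaluation-at-identity ring homomorphism $\prod_{a \in A} \mathbb{Z}_p \to \mathbb{Z}_p$ (projection onto the factor indexed by $0 \in A$) maps the transfer-function ideal $J(A)$ into $p\mathbb{Z}_p$; consequently $1 \notin J(A)$ and the quotient ring $\left(\prod_{a \in A} \mathbb{Z}_p\right)/J(A)$ is nonzero. (This is the class-function argument proving Lemma 2.1.) -/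
open scoped Classical

/-- The class function of the transfer of `1` along a subgroup `A' ≤ A` in `p`-adic
`K`-theory: it takes the value `[A : A']` on elements of `A'` and `0` elsewhere. -/
noncomputable def transferFn (p : ℕ) [Fact p.Prime] {A : Type*} [AddCommGroup A]
    (A' : AddSubgroup A) : A → ℤ_[p] :=
  fun a => if a ∈ A' then (A'.index : ℤ_[p]) else 0

/-- The transfer-function ideal `J(A) ⊆ ∏_{a ∈ A} ℤ_p`, generated by the transfer
functions of all proper subgroups of `A`. -/
noncomputable def transferIdeal (p : ℕ) [Fact p.Prime] (A : Type*) [AddCommGroup A] :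
    Ideal (A → ℤ_[p]) :=
  Ideal.span {x | ∃ A' : AddSubgroup A, A' ≠ ⊤ ∧ x = transferFn p A'}

theorem eval_at_zero_maps_transfer_ideal_into_p (p : ℕ) [Fact p.Prime]
    (A : Type*) [AddCommGroup A] [Finite A] (hA : IsPGroup p (Multiplicative A)) :
    (∀ x ∈ transferIdeal p A,
        Pi.evalRingHom (fun _ : A => ℤ_[p]) 0 x ∈ Ideal.span {(p : ℤ_[p])}) ∧
      (1 : A → ℤ_[p]) ∉ transferIdeal p A ∧
      Nontrivial ((A → ℤ_[p]) ⧸ transferIdeal p A) := by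
  have hp := (Fact.out : p.Prime)
  obtain ⟨n, hn⟩ := IsPGroup.iff_card.mp hA
  have hcard : Nat.card A = p ^ n := hn
  have key : ∀ x ∈ transferIdeal p A,
      Pi.evalRingHom (fun _ : A => ℤ_[p]) 0 x ∈ Ideal.span {(p : ℤ_[p])} := by
    intro x hx
    have : transferIdeal p A ≤
        Ideal.comap (Pi.evalRingHom (fun _ : A => ℤ_[p]) 0) (Ideal.span {(p : ℤ_[p])}) := by
      rw [transferIdeal, Ideal.span_le]
      rintro _ ⟨A', hA', rfl⟩
      simp only [SetLike.mem_coe]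
      rw [Ideal.mem_comap]
      have heval : Pi.evalRingHom (fun _ : A => ℤ_[p]) 0 (transferFn p A') = (A'.index : ℤ_[p]) := by
        simp [transferFn, zero_mem]
      rw [heval, Ideal.mem_span_singleton]
      -- p ∣ A'.index in ℤ_[p]
      have hdvd : A'.index ∣ p ^ n := hcard ▸ A'.index_dvd_card
      obtain ⟨k, hk, hik⟩ := (Nat.dvd_prime_pow hp).mp hdvd
      have hne : A'.index ≠ 1 := fun h => hA' (AddSubgroup.index_eq_one.mp h)
      have hk0 : k ≠ 0 := by rintro rfl; simp [hik] at hne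
      have : p ∣ A'.index := hik ▸ dvd_pow_self p hk0
      exact_mod_cast Nat.cast_dvd_cast (α := ℤ_[p]) this
    exact this hx
  have hone : (1 : A → ℤ_[p]) ∉ transferIdeal p A := by
    intro h
    have := key 1 h
    rw [map_one, Ideal.mem_span_singleton] at this
    have hu : IsUnit (p : ℤ_[p]) := isUnit_of_dvd_one this
    rw [PadicInt.isUnit_iff, PadicInt.norm_p] at hu
    have : (1 : ℝ) < p := by exact_mod_cast hp.one_lt
    have := (inv_eq_one (a := (p : ℝ))).mp hu
    linarith
  refine ⟨key, hone, ?_⟩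
  exact Ideal.Quotient.nontrivial_iff.mpr (fun h => hone (h ▸ Submodule.mem_top))
end

section
/- Let $p$ be a prime and let $A$ be a finite abelian $p$-group that is not cyclic (equivalently, of rank at least $2$). Then the constant function $p$ lies in the transfer-function ideal $J(A) \subseteq \prod_{a \in A} \mathbb{Z}_p$; consequently the nonzero quotient ring $\left(\prod_{a \in A} \mathbb{Z}_p\right)/J(A)$ is an $\mathbb{F}_p$-algebra. -/
open scoped Classical

/-! A noncyclic finite abelian `p`-group surjects onto `V = (ℤ/p)²`, and transfer functions pull
back along a surjection to transfer functions of proper subgroups, so it suffices to treat `V`.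
There `0` lies on all `p + 1` lines and every other vector on exactly one, whence
`∑_L t_L - t_0 = p`. The quotient is nonzero because evaluation at `0` sends every generator into
`p ℤ_p`: proper subgroups of a `p`-group have index divisible by `p`. -/

theorem IsPGroup.prime_dvd_of_dvd_card_of_ne_one {p : ℕ} [Fact p.Prime] {G : Type*} [Group G]
    [Finite G] (hG : IsPGroup p G) {d : ℕ} (hd : d ∣ Nat.card G) (hd1 : d ≠ 1) : p ∣ d := by
  obtain ⟨k, hk⟩ := IsPGroup.iff_card.mp hG
  by_contra hpd
  exact hd1 (Nat.Coprime.eq_one_of_dvd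
    (((Nat.Prime.coprime_iff_not_dvd Fact.out).mpr hpd).symm.pow_right k) (hk ▸ hd))

theorem Pi.surjective_eval_prod {ι : Type*} [DecidableEq ι] {M : ι → Type*}
    [∀ i, AddZeroClass (M i)] {i j : ι} (hij : i ≠ j) :
    Function.Surjective (fun x : (k : ι) → M k => (x i, x j)) := by
  rintro ⟨a, b⟩
  refine ⟨Pi.single i a + Pi.single j b, ?_⟩
  simp [Pi.single_eq_of_ne hij, Pi.single_eq_of_ne hij.symm]

theorem isAddCyclic_pi_of_subsingleton {ι : Type*} [Subsingleton ι] {M : ι → Type*}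
    [∀ i, AddGroup (M i)] [∀ i, IsAddCyclic (M i)] : IsAddCyclic ((i : ι) → M i) := by
  rcases isEmpty_or_nonempty ι with _ | ⟨⟨i⟩⟩
  · infer_instance
  · have : Unique ι := uniqueOfSubsingleton i
    exact isAddCyclic_of_surjective (AddEquiv.piUnique _).symm.toAddMonoidHom
      (AddEquiv.piUnique _).symm.surjective

theorem IsPGroup.exists_surjective_zmod_prod_of_not_isAddCyclic {p : ℕ} [Fact p.Prime]
    {A : Type*} [AddCommGroup A] [Finite A] (hA : IsPGroup p (Multiplicative A))
    (hnc : ¬IsAddCyclic A) : ∃ f : A →+ ZMod p × ZMod p, Function.Surjective f := by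
  obtain ⟨ι, _, n, hn, ⟨e⟩⟩ := AddCommGroup.equiv_directSum_zmod_of_finite' A
  let e' : A ≃+ ((i : ι) → ZMod (n i)) :=
    e.trans (DirectSum.linearEquivFunOnFintype ℤ ι fun i => ZMod (n i)).toAddEquiv
  rcases subsingleton_or_nontrivial ι with _ | _
  · have : IsAddCyclic ((i : ι) → ZMod (n i)) := isAddCyclic_pi_of_subsingleton
    exact (hnc (isAddCyclic_of_surjective e'.symm.toAddMonoidHom e'.symm.surjective)).elim
  have hdvd (i : ι) : p ∣ n i := by
    refine hA.prime_dvd_of_dvd_card_of_ne_one ?_ (hn i).ne'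
    rw [Nat.card_congr (Multiplicative.toAdd.trans e'.toEquiv), Nat.card_pi]
    simpa using Finset.dvd_prod_of_mem n (Finset.mem_univ i)
  obtain ⟨i, j, hij⟩ := exists_pair_ne ι
  refine ⟨((ZMod.castHom (hdvd i) _).toAddMonoidHom.prodMap
      (ZMod.castHom (hdvd j) _).toAddMonoidHom).comp
      (((Pi.evalAddMonoidHom _ i).prod (Pi.evalAddMonoidHom _ j)).comp e'.toAddMonoidHom), ?_⟩
  exact ((ZMod.castHom_surjective (hdvd i)).prodMap (ZMod.castHom_surjective (hdvd j))).comp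
    ((Pi.surjective_eval_prod hij).comp e'.surjective)

section Transfer

variable {p : ℕ} [Fact p.Prime] {A B : Type*} [AddCommGroup A] [AddCommGroup B]

theorem transferFn_mem_transferIdeal {A' : AddSubgroup A} (h : A' ≠ ⊤) :
    transferFn p A' ∈ transferIdeal p A :=
  Ideal.subset_span ⟨A', h, rfl⟩

theorem transferFn_comap {f : A →+ B} (hf : Function.Surjective f) (L : AddSubgroup B) :
    transferFn p (L.comap f) = transferFn p L ∘ f := by
  funext a
  simp [transferFn, AddSubgroup.index_comap_of_surjective L hf]

theorem transferIdeal_le_comap {f : A →+ B} (hf : Function.Surjective f) :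
    transferIdeal p B ≤ (transferIdeal p A).comap
      (RingHom.pi fun a => Pi.evalRingHom (fun _ : B => ℤ_[p]) (f a)) := by
  rw [transferIdeal, Ideal.span_le]
  rintro _ ⟨L, hL, rfl⟩
  have hL' : L.comap f ≠ ⊤ :=
    (AddSubgroup.comap_injective hf).ne_iff' (AddSubgroup.comap_top f) |>.mpr hL
  have h := transferFn_mem_transferIdeal (p := p) hL'
  rw [transferFn_comap hf L] at h
  exact h

theorem transferIdeal_le_comap_eval_zero [Finite A] (hA : IsPGroup p (Multiplicative A)) :
    transferIdeal p A ≤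
      (IsLocalRing.maximalIdeal ℤ_[p]).comap (Pi.evalRingHom (fun _ : A => ℤ_[p]) 0) := by
  rw [transferIdeal, Ideal.span_le]
  rintro _ ⟨A', hA', rfl⟩
  have hp : p ∣ A'.index :=
    hA.prime_dvd_of_dvd_card_of_ne_one A'.index_dvd_card (mt AddSubgroup.index_eq_one.mp hA')
  rw [SetLike.mem_coe, Ideal.mem_comap, PadicInt.maximalIdeal_eq_span_p, Ideal.mem_span_singleton]
  simpa [transferFn] using Nat.cast_dvd_cast hp

theorem transferIdeal_ne_top [Finite A] (hA : IsPGroup p (Multiplicative A)) :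
    transferIdeal p A ≠ ⊤ :=
  ne_top_of_le_ne_top (Ideal.comap_ne_top _ (IsLocalRing.maximalIdeal.isMaximal _).ne_top)
    (transferIdeal_le_comap_eval_zero hA)

end Transfer

section Plane

variable (p : ℕ)

/-- `some c` cuts out the line `y = c x` and `none` the line `x = 0`: these are all `p + 1` lines
of `(ℤ/p)²`. -/
def lineEquation : Option (ZMod p) → (ZMod p × ZMod p →+ ZMod p)
  | none => AddMonoidHom.fst _ _
  | some c => AddMonoidHom.snd _ _ - (AddMonoidHom.mulLeft c).comp (AddMonoidHom.fst _ _)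

def line (o : Option (ZMod p)) : AddSubgroup (ZMod p × ZMod p) :=
  (lineEquation p o).ker

theorem index_line (o : Option (ZMod p)) : (line p o).index = p := by
  have hsurj : Function.Surjective (lineEquation p o) := by
    cases o with
    | none => exact Prod.fst_surjective
    | some c => exact fun y => ⟨(0, y), by simp [lineEquation]⟩
  rw [line, AddSubgroup.index_ker, AddMonoidHom.range_eq_top.mpr hsurj, AddSubgroup.card_top,
    Nat.card_zmod]

@[simp]
theorem mem_line_none {v : ZMod p × ZMod p} : v ∈ line p none ↔ v.1 = 0 :=
  Iff.rfl

@[simp]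
theorem mem_line_some {c : ZMod p} {v : ZMod p × ZMod p} :
    v ∈ line p (some c) ↔ v.2 = c * v.1 :=
  sub_eq_zero

variable [Fact p.Prime]

theorem card_filter_mem_line (v : ZMod p × ZMod p) :
    (Finset.univ.filter fun o => v ∈ line p o).card = if v = 0 then p + 1 else 1 := by
  split_ifs with hv
  · simp [hv, Finset.filter_true_of_mem, (line p _).zero_mem]
  obtain ⟨x, y⟩ := v
  rw [Finset.card_eq_one]
  by_cases hx : x = 0
  · have hy : y ≠ 0 := by simpa [hx] using hv
    refine ⟨none, Finset.eq_singleton_iff_unique_mem.mpr ⟨by simp [hx], ?_⟩⟩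
    rintro (_ | c) h
    · rfl
    · simp [hx, hy] at h
  · refine ⟨some (y / x), Finset.eq_singleton_iff_unique_mem.mpr ⟨by simp [hx], ?_⟩⟩
    rintro (_ | c) h
    · simp [hx] at h
    · simp only [Finset.mem_filter, Finset.mem_univ, true_and, mem_line_some] at h
      rw [h, mul_div_cancel_right₀ _ hx]

theorem sum_transferFn_line_sub_transferFn_bot :
    ∑ o, transferFn p (line p o) - transferFn p (⊥ : AddSubgroup (ZMod p × ZMod p)) = p := by
  funext v
  have hbot : (⊥ : AddSubgroup (ZMod p × ZMod p)).index = p * p := by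
    rw [AddSubgroup.index_bot, Nat.card_prod, Nat.card_zmod]
  simp only [Pi.sub_apply, Finset.sum_apply, transferFn, index_line, hbot, AddSubgroup.mem_bot,
    Pi.natCast_apply]
  rw [← Finset.sum_filter, Finset.sum_const, card_filter_mem_line, nsmul_eq_mul]
  split_ifs <;> push_cast <;> ring

theorem natCast_mem_transferIdeal_zmod_prod :
    (p : ZMod p × ZMod p → ℤ_[p]) ∈ transferIdeal p (ZMod p × ZMod p) := by
  have hline (o : Option (ZMod p)) : line p o ≠ ⊤ := by
    rw [Ne, ← AddSubgroup.index_eq_one, index_line]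
    exact (Fact.out : p.Prime).ne_one
  rw [← sum_transferFn_line_sub_transferFn_bot]
  exact sub_mem (sum_mem fun o _ => transferFn_mem_transferIdeal (hline o))
    (transferFn_mem_transferIdeal bot_ne_top)

end Plane

theorem p_mem_transfer_ideal_of_not_cyclic (p : ℕ) [Fact p.Prime]
    (A : Type*) [AddCommGroup A] [Finite A] (hA : IsPGroup p (Multiplicative A))
    (hnc : ¬ IsAddCyclic A) :
    (p : A → ℤ_[p]) ∈ transferIdeal p A ∧
      Nontrivial ((A → ℤ_[p]) ⧸ transferIdeal p A) ∧
      (p : (A → ℤ_[p]) ⧸ transferIdeal p A) = 0 := by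
  obtain ⟨f, hf⟩ := hA.exists_surjective_zmod_prod_of_not_isAddCyclic hnc
  have hmem : (p : A → ℤ_[p]) ∈ transferIdeal p A := by
    simpa using transferIdeal_le_comap hf (natCast_mem_transferIdeal_zmod_prod p)
  refine ⟨hmem, Ideal.Quotient.nontrivial_iff.mpr (transferIdeal_ne_top hA), ?_⟩
  rw [← map_natCast (Ideal.Quotient.mk _), Ideal.Quotient.eq_zero_iff_mem]
  exact hmem
end
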